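/- Let λ ≥ 0 and suppose that for every positive integer N the classical Margulis walk operator M_N on functions (ZMod N)² → ℂ satisfies ‖M_N g‖₂ ≤ λ·‖g‖₂ whenever Σ_v g(v) = 0. Let f : ℝ² → ℂ be continuous with compact support and ∫_{ℝ²} f(v) dv = 0, and let M_∞ be the continuous Margulis operator, (M_∞ f)(v) = (1/8)·Σ_{T∈𝒮_ℝ} f(T⁻¹(v)). Then ‖M_∞ f‖_{L²(ℝ²)} ≤ λ·‖f‖_{L²(ℝ²)}. -/

import Mathlib

/-!
Sample `f` at the grid points `p / k`, `p ∈ ℤ²` in a box, and reduce `p` modulo `N = k² + 1`.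
Since `k` is a unit mod `N`, scaling by `k` conjugates the finite Margulis walk to the walk whose
translations are `k` instead of `1`, and on the box that walk acts on the samples exactly as the
continuous walk acts on `f`. The finite bound applies to the samples minus their mean; after
dividing by `k` the `ℓ²` norms are Riemann sums for the `L²` norms and the mean is a Riemann sum
for `∫ f = 0`, so letting `k → ∞` gives the continuous bound.
-/

open Matrix BigOperators MeasureTheory

noncomputable section

/-- The eight Margulis transformations, over any commutative ring.
Indices 0–3 are `T₁(v) = S₁v`, `T₂(v) = S₁v + (1,0)ᵀ`, `T₃(v) = S₂v`,
`T₄(v) = S₂v − (0,1)ᵀ` with `S₁ = [[1,2],[0,1]]`, `S₂ = [[1,0],[2,1]]`;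
indices 4–7 are their respective inverses. -/
def marg {R : Type*} [CommRing R] : Fin 8 → R × R → R × R
  | 0 => fun v => (v.1 + 2 * v.2, v.2)
  | 1 => fun v => (v.1 + 2 * v.2 + 1, v.2)
  | 2 => fun v => (v.1, v.2 + 2 * v.1)
  | 3 => fun v => (v.1, v.2 + 2 * v.1 - 1)
  | 4 => fun v => (v.1 - 2 * v.2, v.2)
  | 5 => fun v => (v.1 - 2 * v.2 - 1, v.2)
  | 6 => fun v => (v.1, v.2 - 2 * v.1)
  | 7 => fun v => (v.1, v.2 - 2 * v.1 + 1)

/-- The inverse of the `i`-th Margulis transformation (the family is closed under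
inverses: `marg (i+4)` is the inverse of `marg i`). -/
def margInv {R : Type*} [CommRing R] (i : Fin 8) : R × R → R × R := marg (i + 4)

open Filter Topology

section ScaledMargulis

variable {R : Type*} [CommRing R]

def scaledMargInv (c : R) : Fin 8 → R × R → R × R
  | 0 => fun v => (v.1 - 2 * v.2, v.2)
  | 1 => fun v => (v.1 - 2 * v.2 - c, v.2)
  | 2 => fun v => (v.1, v.2 - 2 * v.1)
  | 3 => fun v => (v.1, v.2 - 2 * v.1 + c)
  | 4 => fun v => (v.1 + 2 * v.2, v.2)
  | 5 => fun v => (v.1 + 2 * v.2 + c, v.2)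
  | 6 => fun v => (v.1, v.2 + 2 * v.1)
  | 7 => fun v => (v.1, v.2 + 2 * v.1 - c)

theorem scaledMargInv_one (i : Fin 8) : scaledMargInv (1 : R) i = margInv i := by
  fin_cases i <;> rfl

theorem margInv_add_four (i : Fin 8) : margInv (i + 4) = (marg i : R × R → R × R) := by
  fin_cases i <;> rfl

theorem marg_margInv (i : Fin 8) (v : R × R) : marg i (margInv i v) = v := by
  fin_cases i <;> ext <;> simp [marg, margInv] <;> ring

theorem smul_scaledMargInv (u c : R) (i : Fin 8) (v : R × R) :
    u • scaledMargInv c i v = scaledMargInv (u * c) i (u • v) := by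
  fin_cases i <;> ext <;> simp [scaledMargInv] <;> ring

theorem intCast_scaledMargInv (c : ℤ) (i : Fin 8) (p : ℤ × ℤ) :
    Prod.map (↑) (↑) (scaledMargInv c i p) = scaledMargInv (c : R) i (Prod.map (↑) (↑) p) := by
  fin_cases i <;> ext <;> simp [scaledMargInv]

theorem abs_scaledMargInv_le [LinearOrder R] [IsStrictOrderedRing R] {a : R} (c : R)
    (i : Fin 8) {v : R × R} (h₁ : |v.1| ≤ a) (h₂ : |v.2| ≤ a) :
    |(scaledMargInv c i v).1| ≤ 3 * a + |c| ∧ |(scaledMargInv c i v).2| ≤ 3 * a + |c| := by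
  rw [abs_le] at h₁ h₂
  have := neg_abs_le c
  have := le_abs_self c
  fin_cases i <;> simp only [scaledMargInv] <;> refine ⟨abs_le.2 ⟨?_, ?_⟩, abs_le.2 ⟨?_, ?_⟩⟩ <;>
    linarith

theorem continuous_margInv (i : Fin 8) : Continuous (margInv i : ℝ × ℝ → ℝ × ℝ) := by
  rw [← scaledMargInv_one]
  fin_cases i <;> simp only [scaledMargInv] <;> fun_prop

end ScaledMargulis

section FiniteWalk

variable {X : Type*}

def walkAvg (T : Fin 8 → X → X) (g : X → ℂ) (v : X) : ℂ := (1 / 8 : ℂ) * ∑ i, g (T i v)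

theorem walkAvg_add_const (T : Fin 8 → X → X) (g : X → ℂ) (c : ℂ) :
    walkAvg T (fun v => g v + c) = fun v => walkAvg T g v + c := by
  ext v
  simp only [walkAvg, Finset.sum_add_distrib, Finset.sum_const, Finset.card_univ,
    Fintype.card_fin]
  ring

variable [Fintype X]

def l2Norm (g : X → ℂ) : ℝ := Real.sqrt (∑ v, ‖g v‖ ^ 2)

def ContractsMeanZero (T : Fin 8 → X → X) (lam : ℝ) : Prop :=
  ∀ g : X → ℂ, ∑ v, g v = 0 → l2Norm (walkAvg T g) ≤ lam * l2Norm g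

theorem l2Norm_eq_norm_toLp (g : X → ℂ) :
    l2Norm g = ‖(WithLp.toLp 2 g : EuclideanSpace ℂ X)‖ := by
  rw [EuclideanSpace.norm_eq]
  rfl

theorem l2Norm_add_le (g h : X → ℂ) : l2Norm (g + h) ≤ l2Norm g + l2Norm h := by
  simpa only [l2Norm_eq_norm_toLp, WithLp.toLp_add] using norm_add_le _ _

theorem l2Norm_neg (g : X → ℂ) : l2Norm (-g) = l2Norm g := by
  simp [l2Norm]

theorem l2Norm_const (c : ℂ) : l2Norm (fun _ : X => c) = Real.sqrt (Fintype.card X) * ‖c‖ := by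
  rw [l2Norm, Finset.sum_const, Finset.card_univ, nsmul_eq_mul, Real.sqrt_mul (by positivity),
    Real.sqrt_sq (norm_nonneg c)]

theorem l2Norm_comp_equiv (e : X ≃ X) (g : X → ℂ) : l2Norm (g ∘ e) = l2Norm g := by
  simp only [l2Norm, Function.comp_apply, e.sum_comp (fun v => ‖g v‖ ^ 2)]

/-- Split `g` into its mean and a mean-zero part: the walk fixes the former and contracts the
latter. -/
theorem l2Norm_walkAvg_le [Nonempty X] {T : Fin 8 → X → X} {lam : ℝ} (hlam : 0 ≤ lam)
    (hT : ContractsMeanZero T lam) (g : X → ℂ) :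
    l2Norm (walkAvg T g) ≤
      lam * (l2Norm g + ‖∑ v, g v‖ / Real.sqrt (Fintype.card X))
        + ‖∑ v, g v‖ / Real.sqrt (Fintype.card X) := by
  set c : ℂ := (∑ v, g v) / Fintype.card X
  have hcard : (Fintype.card X : ℂ) ≠ 0 := Nat.cast_ne_zero.2 Fintype.card_ne_zero
  have hc : l2Norm (fun _ : X => c) = ‖∑ v, g v‖ / Real.sqrt (Fintype.card X) := by
    have hs : Real.sqrt (Fintype.card X) ^ 2 = Fintype.card X := Real.sq_sqrt (Nat.cast_nonneg _)
    have hs₀ : 0 < Real.sqrt (Fintype.card X) := Real.sqrt_pos.2 (by simp [Fintype.card_pos])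
    rw [l2Norm_const, norm_div, Complex.norm_natCast]
    field_simp
    rw [hs, mul_comm]
  set g₀ : X → ℂ := fun v => g v - c
  have hg₀ : ∑ v, g₀ v = 0 := by
    simp only [g₀, c, Finset.sum_sub_distrib, Finset.sum_const, Finset.card_univ, nsmul_eq_mul]
    field_simp
    ring
  have hwalk : walkAvg T g = fun v => walkAvg T g₀ v + c := by
    rw [← walkAvg_add_const]
    simp [g₀]
  have hg : l2Norm g₀ ≤ l2Norm g + l2Norm (fun _ : X => c) := by
    have : g₀ = g + -fun _ => c := by ext; simp [g₀, sub_eq_add_neg]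
    rw [this, ← l2Norm_neg (fun _ => c)]
    exact l2Norm_add_le _ _
  calc l2Norm (walkAvg T g) ≤ l2Norm (walkAvg T g₀) + l2Norm (fun _ : X => c) := by
        rw [hwalk]; exact l2Norm_add_le _ (fun _ => c)
    _ ≤ lam * l2Norm g₀ + l2Norm (fun _ : X => c) := by gcongr; exact hT g₀ hg₀
    _ ≤ _ := by rw [← hc]; gcongr

end FiniteWalk

section ZModWalk

variable {R : Type*} [CommRing R]

theorem walkAvg_margInv_comp_smul (u : R) (g : R × R → ℂ) (w : R × R) :
    walkAvg margInv (fun v => g (u • v)) w = walkAvg (scaledMargInv u) g (u • w) := by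
  simp only [walkAvg, ← scaledMargInv_one (R := R), smul_scaledMargInv, mul_one]

variable [Fintype R]

/-- Conjugate by the scaling `v ↦ u • v`. -/
theorem contractsMeanZero_scaledMargInv {lam : ℝ} (h : ContractsMeanZero (margInv (R := R)) lam)
    (u : Rˣ) : ContractsMeanZero (scaledMargInv (u : R)) lam := by
  intro g hg
  let e : R × R ≃ R × R := MulAction.toPerm u
  have hwalk : walkAvg margInv (g ∘ e) = walkAvg (scaledMargInv (u : R)) g ∘ e := by
    ext w
    exact walkAvg_margInv_comp_smul (u : R) g w
  have h' := h (g ∘ e) (by rw [← hg]; exact e.sum_comp g)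
  rwa [hwalk, l2Norm_comp_equiv, l2Norm_comp_equiv] at h'

end ZModWalk

section Box

def intBox (n : ℕ) : Finset (ℤ × ℤ) := Finset.Icc (-n : ℤ) n ×ˢ Finset.Icc (-n : ℤ) n

theorem mem_intBox {n : ℕ} {p : ℤ × ℤ} : p ∈ intBox n ↔ |p.1| ≤ n ∧ |p.2| ≤ n := by
  simp only [intBox, Finset.mem_product, Finset.mem_Icc, abs_le]

variable {N : ℕ}

def liftZMod (v : ZMod N × ZMod N) : ℤ × ℤ := (v.1.valMinAbs, v.2.valMinAbs)

theorem intCast_liftZMod (v : ZMod N × ZMod N) : Prod.map (↑) (↑) (liftZMod v) = v :=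
  Prod.ext (ZMod.coe_valMinAbs v.1) (ZMod.coe_valMinAbs v.2)

theorem valMinAbs_intCast_of_two_mul_abs_lt [NeZero N] {z : ℤ} (hz : 2 * |z| < N) :
    (z : ZMod N).valMinAbs = z := by
  rw [ZMod.valMinAbs_spec]
  refine ⟨rfl, ?_, ?_⟩ <;> cases abs_cases z <;> omega

theorem liftZMod_intCast [NeZero N] {p : ℤ × ℤ} (h₁ : 2 * |p.1| < N) (h₂ : 2 * |p.2| < N) :
    liftZMod (Prod.map (↑) (↑) p : ZMod N × ZMod N) = p :=
  Prod.ext (valMinAbs_intCast_of_two_mul_abs_lt h₁) (valMinAbs_intCast_of_two_mul_abs_lt h₂)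

theorem liftZMod_intCast_of_mem_intBox [NeZero N] {n : ℕ} (hn : 2 * n < N) {p : ℤ × ℤ}
    (hp : p ∈ intBox n) : liftZMod (Prod.map (↑) (↑) p : ZMod N × ZMod N) = p := by
  rw [mem_intBox] at hp
  exact liftZMod_intCast (by omega) (by omega)

theorem sum_comp_liftZMod [NeZero N] {E : Type*} [AddCommMonoid E] {n : ℕ} (hn : 2 * n < N)
    (G : ℤ × ℤ → E) (hG : ∀ p ∉ intBox n, G p = 0) :
    ∑ v : ZMod N × ZMod N, G (liftZMod v) = ∑ p ∈ intBox n, G p := by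
  rw [← Finset.sum_filter_of_ne (p := fun v => liftZMod v ∈ intBox n)
    (fun v _ hv => by_contra fun h => hv (hG _ h))]
  exact Finset.sum_nbij' liftZMod (Prod.map (↑) (↑)) (fun v hv => (Finset.mem_filter.1 hv).2)
    (fun p hp => by simp [liftZMod_intCast_of_mem_intBox hn hp, hp])
    (fun v _ => intCast_liftZMod v) (fun p hp => liftZMod_intCast_of_mem_intBox hn hp)
    (fun _ _ => rfl)

theorem sum_intBox_intCast_le [NeZero N] {n : ℕ} (hn : 2 * n < N) (H : ZMod N × ZMod N → ℝ)
    (hH : ∀ v, 0 ≤ H v) : ∑ p ∈ intBox n, H (Prod.map (↑) (↑) p) ≤ ∑ v, H v := by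
  calc ∑ p ∈ intBox n, H (Prod.map (↑) (↑) p)
      = ∑ v ∈ (intBox n).image (Prod.map (↑) (↑)), H v := by
        refine (Finset.sum_image fun p hp q hq hpq => ?_).symm
        rw [← liftZMod_intCast_of_mem_intBox hn hp, hpq, liftZMod_intCast_of_mem_intBox hn hq]
    _ ≤ ∑ v, H v := Finset.sum_le_univ_sum_of_nonneg hH

end Box

theorem hasCompactSupport_of_eq_zero_of_lt_norm {V E : Type*} [NormedAddCommGroup V]
    [ProperSpace V] [Zero E] {φ : V → E} {R : ℝ} (h : ∀ x, R < ‖x‖ → φ x = 0) :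
    HasCompactSupport φ :=
  HasCompactSupport.intro (isCompact_closedBall 0 R) fun x hx => h x (by simpa using hx)

theorem HasCompactSupport.exists_nat_eq_zero_of_lt_norm {V E : Type*} [NormedAddCommGroup V]
    [Zero E] {φ : V → E} (h : HasCompactSupport φ) : ∃ r : ℕ, ∀ x, (r : ℝ) < ‖x‖ → φ x = 0 := by
  obtain ⟨r, hr⟩ := h.isBounded.subset_closedBall 0
  exact ⟨⌈r⌉₊, fun x hx => image_eq_zero_of_notMem_tsupport fun hx' =>
    (mem_closedBall_zero_iff.1 (hr hx')).not_gt ((Nat.le_ceil r).trans_lt hx)⟩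


section RiemannSum

def gridPt (k : ℕ) (p : ℤ × ℤ) : ℝ × ℝ := (k : ℝ)⁻¹ • Prod.map (↑) (↑) p

def gridFloor (k : ℕ) (x : ℝ × ℝ) : ℤ × ℤ := (⌊(k : ℝ) * x.1⌋, ⌊(k : ℝ) * x.2⌋)

def riemannSum {E : Type*} [NormedAddCommGroup E] [NormedSpace ℝ E] (φ : ℝ × ℝ → E)
    (k R : ℕ) : E :=
  ((k : ℝ) ^ 2)⁻¹ • ∑ p ∈ intBox (k * R), φ (gridPt k p)

theorem margInv_gridPt {k : ℕ} (hk : k ≠ 0) (i : Fin 8) (p : ℤ × ℤ) :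
    margInv i (gridPt k p) = gridPt k (scaledMargInv (k : ℤ) i p) := by
  rw [gridPt, gridPt, intCast_scaledMargInv, smul_scaledMargInv, ← scaledMargInv_one,
    Int.cast_natCast, inv_mul_cancel₀ (Nat.cast_ne_zero.2 hk)]

theorem norm_gridPt_le_iff {k : ℕ} (hk : k ≠ 0) (R : ℕ) (p : ℤ × ℤ) :
    ‖gridPt k p‖ ≤ R ↔ p ∈ intBox (k * R) := by
  have hk₀ : (0 : ℝ) < k := Nat.cast_pos.2 (Nat.pos_of_ne_zero hk)
  rw [gridPt, norm_smul, norm_inv, Real.norm_natCast, inv_mul_le_iff₀ hk₀, Prod.norm_def,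
    max_le_iff, mem_intBox]
  simp only [Prod.map_fst, Prod.map_snd, Real.norm_eq_abs, ← Int.cast_abs]
  norm_cast

theorem norm_sub_gridPt_gridFloor_le {k : ℕ} (hk : k ≠ 0) (x : ℝ × ℝ) :
    ‖x - gridPt k (gridFloor k x)‖ ≤ (k : ℝ)⁻¹ := by
  have hk₀ : (0 : ℝ) < k := Nat.cast_pos.2 (Nat.pos_of_ne_zero hk)
  have key : ∀ y : ℝ, ‖y - (k : ℝ)⁻¹ * ⌊(k : ℝ) * y⌋‖ ≤ (k : ℝ)⁻¹ := by
    intro y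
    have hfract : y - (k : ℝ)⁻¹ * ⌊(k : ℝ) * y⌋ = (k : ℝ)⁻¹ * Int.fract ((k : ℝ) * y) := by
      rw [Int.fract]
      field_simp
    rw [hfract, norm_mul, norm_inv, Real.norm_natCast, Real.norm_of_nonneg (Int.fract_nonneg _)]
    exact mul_le_of_le_one_right (by positivity) (Int.fract_lt_one _).le
  rw [Prod.norm_def, max_le_iff]
  exact ⟨key x.1, key x.2⟩

theorem tendsto_gridPt_gridFloor (x : ℝ × ℝ) :
    Tendsto (fun k => gridPt k (gridFloor k x)) atTop (𝓝 x) := by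
  rw [tendsto_iff_norm_sub_tendsto_zero]
  refine squeeze_zero' (Eventually.of_forall fun _ => norm_nonneg _) ?_
    tendsto_inv_atTop_nhds_zero_nat
  filter_upwards [eventually_ne_atTop 0] with k hk
  rw [norm_sub_rev]
  exact norm_sub_gridPt_gridFloor_le hk x

theorem volume_gridFloor_preimage {k : ℕ} (hk : k ≠ 0) (p : ℤ × ℤ) :
    volume (gridFloor k ⁻¹' {p}) = ENNReal.ofReal ((k : ℝ) ^ 2)⁻¹ := by
  have hk₀ : (0 : ℝ) < k := Nat.cast_pos.2 (Nat.pos_of_ne_zero hk)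
  have hcell : gridFloor k ⁻¹' {p} =
      (((k : ℝ) * ·) ⁻¹' (Int.floor ⁻¹' {p.1})) ×ˢ (((k : ℝ) * ·) ⁻¹' (Int.floor ⁻¹' {p.2})) := by
    ext x
    simp only [gridFloor, Set.mem_preimage, Set.mem_singleton_iff, Set.mem_prod, Prod.ext_iff]
  rw [hcell, Measure.volume_eq_prod, Measure.prod_prod, Int.preimage_floor_singleton,
    Int.preimage_floor_singleton, Real.volume_preimage_mul_left hk₀.ne',
    Real.volume_preimage_mul_left hk₀.ne', Real.volume_Ico, Real.volume_Ico, add_sub_cancel_left,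
    add_sub_cancel_left, ENNReal.ofReal_one, mul_one, abs_inv, abs_of_pos hk₀,
    ← ENNReal.ofReal_mul (by positivity), ← mul_inv, sq]

theorem measurable_gridFloor (k : ℕ) : Measurable (gridFloor k) :=
  ((measurable_const.mul measurable_fst).floor).prodMk ((measurable_const.mul measurable_snd).floor)

theorem integral_comp_gridFloor {E : Type*} [NormedAddCommGroup E] [NormedSpace ℝ E]
    [CompleteSpace E] {k : ℕ} (hk : k ≠ 0) (G : ℤ × ℤ → E) (s : Finset (ℤ × ℤ))
    (hG : ∀ p ∉ s, G p = 0) :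
    ∫ x, G (gridFloor k x) = ((k : ℝ) ^ 2)⁻¹ • ∑ p ∈ s, G p := by
  have hcell : ∀ p, MeasurableSet (gridFloor k ⁻¹' {p}) :=
    fun p => measurable_gridFloor k (measurableSet_singleton p)
  have hsplit : (fun x => G (gridFloor k x)) =
      fun x => ∑ p ∈ s, (gridFloor k ⁻¹' {p}).indicator (fun _ => G p) x := by
    ext x
    rw [Finset.sum_eq_single (gridFloor k x)]
    · simp
    · intro p _ hp
      exact Set.indicator_of_notMem (Ne.symm hp) _
    · intro hx
      simp [hG _ hx]
  rw [hsplit, integral_finsetSum, Finset.smul_sum]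
  · refine Finset.sum_congr rfl fun p _ => ?_
    rw [integral_indicator_const _ (hcell p), Measure.real, volume_gridFloor_preimage hk,
      ENNReal.toReal_ofReal (by positivity)]
  · intro p _
    refine (integrable_indicator_iff (hcell p)).2 (integrableOn_const ?_)
    rw [volume_gridFloor_preimage hk]
    exact ENNReal.ofReal_ne_top

variable {E : Type*} [NormedAddCommGroup E] [NormedSpace ℝ E] [CompleteSpace E]
  {φ : ℝ × ℝ → E} {R : ℕ}

theorem riemannSum_eq_integral (hR : ∀ x, (R : ℝ) < ‖x‖ → φ x = 0) {k : ℕ} (hk : k ≠ 0) :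
    riemannSum φ k R = ∫ x, φ (gridPt k (gridFloor k x)) := by
  refine (integral_comp_gridFloor hk (φ ∘ gridPt k) (intBox (k * R)) fun p hp => hR _ ?_).symm
  rwa [← not_le, norm_gridPt_le_iff hk]

theorem tendsto_riemannSum (hφ : Continuous φ) (hR : ∀ x, (R : ℝ) < ‖x‖ → φ x = 0) :
    Tendsto (riemannSum φ · R) atTop (𝓝 (∫ x, φ x)) := by
  obtain ⟨C, hC⟩ :=
    hφ.bounded_above_of_compact_support (hasCompactSupport_of_eq_zero_of_lt_norm hR)
  have hbound : ∀ k ≠ 0, ∀ x, ‖φ (gridPt k (gridFloor k x))‖ ≤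
      (Metric.closedBall (0 : ℝ × ℝ) (R + 1)).indicator (fun _ => C) x := by
    intro k hk x
    by_cases hx : x ∈ Metric.closedBall (0 : ℝ × ℝ) (R + 1)
    · rw [Set.indicator_of_mem hx]
      exact hC _
    · rw [Set.indicator_of_notMem hx, hR, norm_zero]
      have hk₁ : (k : ℝ)⁻¹ ≤ 1 := inv_le_one_of_one_le₀ (Nat.one_le_cast.2 (Nat.pos_of_ne_zero hk))
      have := norm_sub_norm_le x (gridPt k (gridFloor k x))
      have := norm_sub_gridPt_gridFloor_le hk x
      simp only [Metric.mem_closedBall, dist_zero_right, not_le] at hx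
      linarith
  have hlim := tendsto_integral_filter_of_dominated_convergence
    ((Metric.closedBall (0 : ℝ × ℝ) (R + 1)).indicator fun _ => C)
    (Eventually.of_forall fun k => (hφ.stronglyMeasurable.comp_measurable
      ((measurable_of_countable (gridPt k)).comp (measurable_gridFloor k))).aestronglyMeasurable)
    ((eventually_ne_atTop 0).mono fun k hk => Eventually.of_forall (hbound k hk))
    ((integrable_indicator_iff measurableSet_closedBall).2
      (integrableOn_const (measure_closedBall_lt_top (μ := volume)).ne))
    (Eventually.of_forall fun x => (hφ.tendsto x).comp (tendsto_gridPt_gridFloor x))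
  refine hlim.congr' ?_
  filter_upwards [eventually_ne_atTop 0] with k hk using (riemannSum_eq_integral hR hk).symm

end RiemannSum

section Discretization

theorem norm_le_of_norm_margInv_le {r : ℝ} (i : Fin 8) {x : ℝ × ℝ} (h : ‖margInv i x‖ ≤ r) :
    ‖x‖ ≤ 3 * r + 1 := by
  rw [← marg_margInv i x, ← margInv_add_four, ← scaledMargInv_one]
  obtain ⟨h₁, h₂⟩ := abs_scaledMargInv_le 1 (i + 4)
    ((norm_fst_le (margInv i x)).trans h) ((norm_snd_le (margInv i x)).trans h)
  rw [abs_one] at h₁ h₂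
  rw [Prod.norm_def]
  exact max_le h₁ h₂

theorem walkAvg_margInv_eq_zero {f : ℝ × ℝ → ℂ} {r : ℝ} (hf : ∀ x, r < ‖x‖ → f x = 0)
    {x : ℝ × ℝ} (hx : 3 * r + 1 < ‖x‖) : walkAvg margInv f x = 0 := by
  refine mul_eq_zero_of_right _ (Finset.sum_eq_zero fun i _ => hf _ ?_)
  by_contra! h
  exact (norm_le_of_norm_margInv_le i h).not_gt hx

def gridSample (N : ℕ) (f : ℝ × ℝ → ℂ) (k : ℕ) (v : ZMod N × ZMod N) : ℂ :=
  f (gridPt k (liftZMod v))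

variable {f : ℝ × ℝ → ℂ} {R k N : ℕ} [NeZero N]

theorem walkAvg_gridSample_intCast (hk : k ≠ 0) (hN : 2 * (3 * (k * R) + k) < N) {p : ℤ × ℤ}
    (hp : p ∈ intBox (k * R)) :
    walkAvg (scaledMargInv (k : ZMod N)) (gridSample N f k) (Prod.map (↑) (↑) p)
      = walkAvg margInv f (gridPt k p) := by
  refine congrArg _ (Finset.sum_congr rfl fun i _ => ?_)
  obtain ⟨h₁, h₂⟩ := abs_scaledMargInv_le (k : ℤ) i (mem_intBox.1 hp).1 (mem_intBox.1 hp).2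
  rw [Nat.abs_cast] at h₁ h₂
  rw [← Int.cast_natCast, ← intCast_scaledMargInv, margInv_gridPt hk, gridSample,
    liftZMod_intCast (by push_cast at h₁; omega) (by push_cast at h₂; omega)]

variable (hR : ∀ x, (R : ℝ) < ‖x‖ → f x = 0) (hk : k ≠ 0) (hN : 2 * (k * R) < N)
include hR hk hN

theorem sum_gridSample : ∑ v, gridSample N f k v = ∑ p ∈ intBox (k * R), f (gridPt k p) :=
  sum_comp_liftZMod hN (f ∘ gridPt k) fun p hp => hR _ <| by
    rwa [← not_le, norm_gridPt_le_iff hk]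

theorem l2Norm_gridSample :
    l2Norm (gridSample N f k) = Real.sqrt (∑ p ∈ intBox (k * R), ‖f (gridPt k p)‖ ^ 2) :=
  congrArg Real.sqrt <| sum_comp_liftZMod hN (fun p => ‖f (gridPt k p)‖ ^ 2) fun p hp => by
    rw [hR _ <| by rwa [← not_le, norm_gridPt_le_iff hk], norm_zero, sq, zero_mul]

end Discretization

section Comparison

variable {f : ℝ × ℝ → ℂ} {R k : ℕ} {lam : ℝ}

theorem sqrt_sum_walkAvg_gridPt_le (hlam : 0 ≤ lam) (hR : ∀ x, (R : ℝ) < ‖x‖ → f x = 0)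
    (hk : k ≠ 0) {N : ℕ} [NeZero N] (hkN : k.Coprime N) (hN : 2 * (3 * (k * R) + k) < N)
    (hcontr : ContractsMeanZero (margInv (R := ZMod N)) lam) :
    Real.sqrt (∑ p ∈ intBox (k * R), ‖walkAvg margInv f (gridPt k p)‖ ^ 2) ≤
      lam * (Real.sqrt (∑ p ∈ intBox (k * R), ‖f (gridPt k p)‖ ^ 2)
          + ‖∑ p ∈ intBox (k * R), f (gridPt k p)‖ / N)
        + ‖∑ p ∈ intBox (k * R), f (gridPt k p)‖ / N := by
  have hN' : 2 * (k * R) < N := by omega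
  have hcontr' := contractsMeanZero_scaledMargInv hcontr (ZMod.unitOfCoprime k hkN)
  rw [ZMod.coe_unitOfCoprime] at hcontr'
  have hcard : Real.sqrt (Fintype.card (ZMod N × ZMod N)) = N := by
    rw [Fintype.card_prod, ZMod.card, Nat.cast_mul, Real.sqrt_mul_self (Nat.cast_nonneg N)]
  calc Real.sqrt (∑ p ∈ intBox (k * R), ‖walkAvg margInv f (gridPt k p)‖ ^ 2)
      = Real.sqrt (∑ p ∈ intBox (k * R),
          ‖walkAvg (scaledMargInv (k : ZMod N)) (gridSample N f k) (Prod.map (↑) (↑) p)‖ ^ 2) := by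
        congr 1
        exact Finset.sum_congr rfl fun p hp => by rw [walkAvg_gridSample_intCast hk hN hp]
    _ ≤ l2Norm (walkAvg (scaledMargInv (k : ZMod N)) (gridSample N f k)) :=
        Real.sqrt_le_sqrt (sum_intBox_intCast_le hN'
          (fun v => ‖walkAvg (scaledMargInv (k : ZMod N)) (gridSample N f k) v‖ ^ 2)
          fun _ => sq_nonneg _)
    _ ≤ _ := by
        have := l2Norm_walkAvg_le hlam hcontr' (gridSample N f k)
        rwa [sum_gridSample hR hk hN', l2Norm_gridSample hR hk hN', hcard] at this

theorem sqrt_riemannSum_walkAvg_le (hlam : 0 ≤ lam) (hR : ∀ x, (R : ℝ) < ‖x‖ → f x = 0)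
    (hk : 6 * R + 2 ≤ k) (hcontr : ContractsMeanZero (margInv (R := ZMod (k ^ 2 + 1))) lam) :
    Real.sqrt (riemannSum (fun x => ‖walkAvg margInv f x‖ ^ 2) k R) ≤
      lam * (Real.sqrt (riemannSum (fun x => ‖f x‖ ^ 2) k R) + ‖riemannSum f k R‖)
        + ‖riemannSum f k R‖ := by
  have hk₀ : k ≠ 0 := by omega
  have hkpos : (0 : ℝ) < k := Nat.cast_pos.2 (Nat.pos_of_ne_zero hk₀)
  have hkN : k.Coprime (k ^ 2 + 1) := by simp [sq]
  have hN : 2 * (3 * (k * R) + k) < k ^ 2 + 1 := by nlinarith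
  have hfin := sqrt_sum_walkAvg_gridPt_le hlam hR hk₀ hkN hN hcontr
  set S := ∑ p ∈ intBox (k * R), f (gridPt k p)
  set e := ‖S‖ / ((k ^ 2 + 1 : ℕ) : ℝ) with he_def
  have he : (k : ℝ)⁻¹ * e ≤ ‖riemannSum f k R‖ := by
    rw [riemannSum, norm_smul, Real.norm_of_nonneg (by positivity)]
    calc (k : ℝ)⁻¹ * e ≤ (k : ℝ)⁻¹ * (‖S‖ / k) := by
          rw [he_def]
          gcongr
          nlinarith
      _ = ((k : ℝ) ^ 2)⁻¹ * ‖S‖ := by field_simp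
  have hsqrt : ∀ φ : ℝ × ℝ → ℝ, Real.sqrt (riemannSum φ k R) =
      (k : ℝ)⁻¹ * Real.sqrt (∑ p ∈ intBox (k * R), φ (gridPt k p)) := by
    intro φ
    rw [riemannSum, smul_eq_mul, Real.sqrt_mul (by positivity), Real.sqrt_inv,
      Real.sqrt_sq hkpos.le]
  calc Real.sqrt (riemannSum (fun x => ‖walkAvg margInv f x‖ ^ 2) k R)
      = (k : ℝ)⁻¹ * Real.sqrt (∑ p ∈ intBox (k * R), ‖walkAvg margInv f (gridPt k p)‖ ^ 2) :=
        hsqrt _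
    _ ≤ (k : ℝ)⁻¹ * (lam * (Real.sqrt (∑ p ∈ intBox (k * R), ‖f (gridPt k p)‖ ^ 2) + e) + e) := by
        gcongr
    _ = lam * ((k : ℝ)⁻¹ * Real.sqrt (∑ p ∈ intBox (k * R), ‖f (gridPt k p)‖ ^ 2) + (k : ℝ)⁻¹ * e)
          + (k : ℝ)⁻¹ * e := by ring
    _ ≤ _ := by
        rw [hsqrt]
        gcongr

end Comparison

theorem eLpNorm_two_eq_sqrt_integral {α E : Type*} [MeasurableSpace α] {μ : Measure α}
    [NormedAddCommGroup E] {q : α → E} (hq : MemLp q 2 μ) :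
    eLpNorm q 2 μ = ENNReal.ofReal (Real.sqrt (∫ x, ‖q x‖ ^ 2 ∂μ)) := by
  rw [hq.eLpNorm_eq_integral_rpow_norm two_ne_zero ENNReal.ofNat_ne_top, Real.sqrt_eq_rpow]
  norm_num

/-- if every finite Margulis walk operator `M_N` contracts mean-zero
functions on `(ZMod N)²` by `λ` in `ℓ²`, then the continuous Margulis operator
`(M_∞ f)(v) = (1/8)·Σ_T f(T⁻¹(v))` contracts every continuous, compactly supported,
mean-zero `f : ℝ² → ℂ` by `λ` in `L²(ℝ²)`. -/
theorem continuous_margulis_expander (lam : ℝ) (hlam : 0 ≤ lam)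
    (hclass : ∀ (N : ℕ) [NeZero N], ∀ g : ZMod N × ZMod N → ℂ, (∑ v, g v) = 0 →
      Real.sqrt (∑ v, ‖(1 / 8 : ℂ) * ∑ i : Fin 8, g (margInv i v)‖ ^ 2)
        ≤ lam * Real.sqrt (∑ v, ‖g v‖ ^ 2))
    (f : ℝ × ℝ → ℂ) (hf : Continuous f) (hsupp : HasCompactSupport f)
    (hmean : (∫ v, f v) = 0) :
    eLpNorm (fun v : ℝ × ℝ => (1 / 8 : ℂ) * ∑ i : Fin 8, f (margInv i v)) 2 volume
      ≤ ENNReal.ofReal lam * eLpNorm f 2 volume := by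
  obtain ⟨r, hf₀⟩ := hsupp.exists_nat_eq_zero_of_lt_norm
  set R := 3 * r + 1
  have hfR : ∀ x, (R : ℝ) < ‖x‖ → f x = 0 := fun x hx => hf₀ x (by push_cast [R] at hx; linarith)
  have hFR : ∀ x, (R : ℝ) < ‖x‖ → walkAvg margInv f x = 0 := fun x hx =>
    walkAvg_margInv_eq_zero hf₀ (by push_cast [R] at hx; linarith)
  have hF : Continuous (walkAvg margInv f) :=
    continuous_const.mul (continuous_finsetSum _ fun i _ => hf.comp (continuous_margInv i))
  have hlimF : Tendsto (fun k => Real.sqrt (riemannSum (fun x => ‖walkAvg margInv f x‖ ^ 2) k R))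
      atTop (𝓝 (Real.sqrt (∫ x, ‖walkAvg margInv f x‖ ^ 2))) :=
    (tendsto_riemannSum (by fun_prop) fun x hx => by simp [hFR x hx]).sqrt
  have hlimf : Tendsto (fun k => Real.sqrt (riemannSum (fun x => ‖f x‖ ^ 2) k R))
      atTop (𝓝 (Real.sqrt (∫ x, ‖f x‖ ^ 2))) :=
    (tendsto_riemannSum (by fun_prop) fun x hx => by simp [hfR x hx]).sqrt
  have hlimMean : Tendsto (fun k => ‖riemannSum f k R‖) atTop (𝓝 ‖(0 : ℂ)‖) :=
    (hmean ▸ tendsto_riemannSum hf hfR).norm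
  have hlim := le_of_tendsto_of_tendsto hlimF
    (((hlimf.add hlimMean).const_mul lam).add hlimMean) <| by
      filter_upwards [eventually_ge_atTop (6 * R + 2)] with k hk
      exact sqrt_riemannSum_walkAvg_le hlam hfR hk (hclass _)
  rw [norm_zero, add_zero, add_zero] at hlim
  change eLpNorm (walkAvg margInv f) 2 volume ≤ _
  rw [eLpNorm_two_eq_sqrt_integral (hF.memLp_of_hasCompactSupport
      (hasCompactSupport_of_eq_zero_of_lt_norm hFR)),
    eLpNorm_two_eq_sqrt_integral (hf.memLp_of_hasCompactSupport hsupp), ← ENNReal.ofReal_mul hlam]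
  exact ENNReal.ofReal_le_ofReal hlim
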